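/- arXiv:1006.1944 — 6 statements merged into one kernel-verified Lean document; each statement's English description precedes it below -/
import Mathlib

section
/- Let u be a d × d real matrix with uⁿ = 1 for some n ≥ 1 such that 1 is not an eigenvalue of u (equivalently det(u − 1) ≠ 0), let T > 0, and let x : ℝ → ℝ^d be continuous with x(t + T) = u · x(t) for all t ∈ ℝ. Then ∫₀^{nT} x(t) dt = 0. -/
open MeasureTheory intervalIntegral

/-- Proposition 3 (core): if the one-period evolution matrix `u` has finite
order `n` and no eigenvalue `1`, the time average of the trajectory over the
`n` periods vanishes. -/
theorem loop_center_vanishes_of_finite_order_no_eigenvalue_one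
    (d : ℕ) (u : Matrix (Fin d) (Fin d) ℝ)
    (n : ℕ) (hn : 1 ≤ n) (hun : u ^ n = 1)
    (h1 : (u - 1).det ≠ 0)
    (T : ℝ) (hT : 0 < T)
    (x : ℝ → Fin d → ℝ) (hx : Continuous x)
    (hper : ∀ t : ℝ, x (t + T) = u.mulVec (x t)) :
    ∫ t in (0:ℝ)..(n * T), x t = 0 := by
  set J : Fin d → ℝ := ∫ t in (0:ℝ)..(n * T), x t with hJ
  -- x is periodic with period n*T
  have hperiodic : Function.Periodic x (n * T) := by
    intro t
    have key : ∀ m : ℕ, x (t + m * T) = (u ^ m).mulVec (x t) := by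
      intro m
      induction m with
      | zero => simp [Matrix.one_mulVec]
      | succ k ih =>
        have : t + (k + 1 : ℕ) * T = (t + k * T) + T := by push_cast; ring
        rw [this, hper, ih, Matrix.mulVec_mulVec, ← pow_succ']
    have := key n
    rw [hun, Matrix.one_mulVec] at this
    exact this
  have hint : ∀ a b : ℝ, IntervalIntegrable x MeasureTheory.volume a b :=
    fun a b => hx.intervalIntegrable a b
  -- the continuous linear map mulVec
  let L : (Fin d → ℝ) →L[ℝ] (Fin d → ℝ) := LinearMap.toContinuousLinearMap u.mulVecLin
  have hL : ∀ v, L v = u.mulVec v := fun v => rfl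
  -- u.mulVec J = J
  have huJ : u.mulVec J = J := by
    have e1 : u.mulVec J = ∫ t in (0:ℝ)..(n * T), u.mulVec (x t) := by
      rw [← hL J, hJ, ← ContinuousLinearMap.intervalIntegral_comp_comm L (hint 0 (n * T))]
      rfl
    have e2 : (∫ t in (0:ℝ)..(n * T), u.mulVec (x t)) = ∫ t in (0:ℝ)..(n * T), x (t + T) := by
      apply intervalIntegral.integral_congr
      intro t _
      exact (hper t).symm
    have e3 : (∫ t in (0:ℝ)..(n * T), x (t + T)) = ∫ t in (T:ℝ)..(n * T + T), x t := by
      rw [intervalIntegral.integral_comp_add_right]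
      norm_num
    have e4 : (∫ t in (T:ℝ)..(n * T + T), x t) = J := by
      rw [hJ]
      have := hperiodic.intervalIntegral_add_eq T 0
      simpa [add_comm] using this
    rw [e1, e2, e3, e4]
  -- (u - 1).mulVec J = 0, and u - 1 invertible
  have hz : (u - 1).mulVec J = 0 := by
    rw [Matrix.sub_mulVec, huJ, Matrix.one_mulVec, sub_self]
  have hunit : IsUnit (u - 1).det := isUnit_iff_ne_zero.mpr h1
  have hinv : (u - 1)⁻¹ * (u - 1) = 1 := Matrix.nonsing_inv_mul _ hunit
  calc J = ((u - 1)⁻¹ * (u - 1)).mulVec J := by rw [hinv, Matrix.one_mulVec]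
    _ = (u - 1)⁻¹.mulVec ((u - 1).mulVec J) := by rw [← Matrix.mulVec_mulVec]
    _ = 0 := by rw [hz, Matrix.mulVec_zero]
end

section
/- Let γ : ℝ → ℝ be continuous, let Λ(t) be the 2 × 2 real matrix with rows (0, 1) and (−γ(t), 0), and let b : ℝ → M₂(ℝ) be differentiable with b(0) = 1 (the identity matrix) and b′(t) = Λ(t) b(t) + b(t) Λ(t) for all t. Then for all t ∈ ℝ: b(t)₁₂ · b(t)₂₁ = (Tr b(t))²/4 − 1, where b(t)₁₂ and b(t)₂₁ denote the off-diagonal entries of b(t). -/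
/-- The conserved-quantity identity of Proposition 4: for the symmetric-interval
evolution matrix `b` satisfying `b' = Λ(t) b + b Λ(t)` with `b 0 = 1`, one has
`b₁₂ b₂₁ = (Tr b)²/4 − 1` at all times. -/
theorem offdiag_product_eq_quarter_trace_sq_sub_one
    (γ : ℝ → ℝ) (hγ : Continuous γ)
    (Λ : ℝ → Matrix (Fin 2) (Fin 2) ℝ)
    (hΛ : ∀ t, Λ t = !![0, 1; -γ t, 0])
    (b : ℝ → Matrix (Fin 2) (Fin 2) ℝ)
    (hb0 : b 0 = 1)
    (hb : ∀ t, ∀ i j : Fin 2,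
      HasDerivAt (fun s => b s i j) ((Λ t * b t + b t * Λ t) i j) t) :
    ∀ t : ℝ, b t 0 1 * b t 1 0 = (b t).trace ^ 2 / 4 - 1 := by
  have key : ∀ t,
      (Λ t * b t + b t * Λ t) 0 0 = b t 1 0 - γ t * b t 0 1 ∧
      (Λ t * b t + b t * Λ t) 0 1 = b t 0 0 + b t 1 1 ∧
      (Λ t * b t + b t * Λ t) 1 0 = -γ t * (b t 0 0 + b t 1 1) ∧
      (Λ t * b t + b t * Λ t) 1 1 = b t 1 0 - γ t * b t 0 1 := by
    intro t
    rw [hΛ t]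
    refine ⟨?_, ?_, ?_, ?_⟩ <;>
      simp [Matrix.mul_apply, Fin.sum_univ_two, Matrix.add_apply, Matrix.vecMul, dotProduct] <;> ring
  set F : ℝ → ℝ := fun t => b t 0 1 * b t 1 0 - (b t 0 0 + b t 1 1) ^ 2 / 4 with hF
  have hF' : ∀ t, HasDerivAt F 0 t := by
    intro t
    have h00 := (hb t 0 0); have h01 := (hb t 0 1)
    have h10 := (hb t 1 0); have h11 := (hb t 1 1)
    rw [(key t).1] at h00
    rw [(key t).2.1] at h01
    rw [(key t).2.2.1] at h10
    rw [(key t).2.2.2] at h11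
    have hD : HasDerivAt F
        ((b t 0 0 + b t 1 1) * b t 1 0 + b t 0 1 * (-γ t * (b t 0 0 + b t 1 1)) -
          (2 * (b t 0 0 + b t 1 1) ^ 1 *
            ((b t 1 0 - γ t * b t 0 1) + (b t 1 0 - γ t * b t 0 1))) / 4) t := by
      exact ((h01.mul h10).sub (((h00.add h11).pow 2).div_const 4))
    convert hD using 1
    ring
  have hconst : ∀ t, F t = F 0 := by
    intro t
    have : ∀ s, deriv F s = 0 := fun s => (hF' s).deriv
    have hdiff : Differentiable ℝ F := fun s => (hF' s).differentiableAt
    exact is_const_of_deriv_eq_zero hdiff (fun s => (hF' s).deriv) t 0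
  intro t
  have hFt := hconst t
  have hF0 : F 0 = -1 := by
    simp [hF, hb0, Matrix.one_apply]
    norm_num
  rw [Matrix.trace_fin_two]
  have := hFt.trans hF0
  simp only [hF] at this
  linarith
end

section
/- Let γ : ℝ → ℝ be continuous, let Λ(t) be the 2 × 2 real matrix with rows (0, 1) and (−γ(t), 0), and let b : ℝ → M₂(ℝ) be differentiable with b(0) = 1 and b′(t) = Λ(t) b(t) + b(t) Λ(t) for all t. Then the diagonal entries of b(t) are equal for all t (b(t)₁₁ = b(t)₂₂), and: (i) if Tr b(t₀) = 2 at some time t₀, then b(t₀) has both diagonal entries equal to 1 and at least one off-diagonal entry equal to 0, i.e. b(t₀) is of one of the Jordan forms [[1, τ], [0, 1]] or [[1, 0], [−a, 1]] for some real τ or a; (ii) if Tr b(t₀) = −2, then b(t₀) is of one of the forms −[[1, τ], [0, 1]] or −[[1, 0], [−a, 1]]. -/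
/-- Proposition 4: for the symmetric-interval evolution matrix `b` satisfying
`b' = Λ(t) b + b Λ(t)` with `b 0 = 1`, the diagonal entries of `b t` coincide;
if `Tr b = 2` then `b` is one of the Jordan forms `[[1, τ], [0, 1]]` or
`[[1, 0], [−a, 1]]`, while if `Tr b = −2` it is minus one of these forms. -/
theorem jordan_form_on_stability_threshold
    (γ : ℝ → ℝ) (hγ : Continuous γ)
    (Λ : ℝ → Matrix (Fin 2) (Fin 2) ℝ)
    (hΛ : ∀ t, Λ t = !![0, 1; -γ t, 0])
    (b : ℝ → Matrix (Fin 2) (Fin 2) ℝ)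
    (hb0 : b 0 = 1)
    (hb : ∀ t, ∀ i j : Fin 2,
      HasDerivAt (fun s => b s i j) ((Λ t * b t + b t * Λ t) i j) t) :
    (∀ t : ℝ, b t 0 0 = b t 1 1) ∧
    (∀ t₀ : ℝ, (b t₀).trace = 2 →
      (∃ τ : ℝ, b t₀ = !![1, τ; 0, 1]) ∨ (∃ a : ℝ, b t₀ = !![1, 0; -a, 1])) ∧
    (∀ t₀ : ℝ, (b t₀).trace = -2 →
      (∃ τ : ℝ, b t₀ = -!![1, τ; 0, 1]) ∨ (∃ a : ℝ, b t₀ = -!![1, 0; -a, 1])) := by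
  -- explicit entrywise derivatives
  have h00 : ∀ t, HasDerivAt (fun s => b s 0 0) (b t 1 0 - γ t * b t 0 1) t := by
    intro t
    have := hb t 0 0
    simpa [hΛ t, Matrix.mul_apply, Matrix.vecMul, dotProduct, Matrix.vecHead, Matrix.vecTail, Fin.sum_univ_two, sub_eq_add_neg, add_comm,
      mul_comm] using this
  have h01 : ∀ t, HasDerivAt (fun s => b s 0 1) (b t 1 1 + b t 0 0) t := by
    intro t
    have := hb t 0 1
    simpa [hΛ t, Matrix.mul_apply, Matrix.vecMul, dotProduct, Matrix.vecHead, Matrix.vecTail, Fin.sum_univ_two, add_comm] using this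
  have h10 : ∀ t, HasDerivAt (fun s => b s 1 0) (-γ t * (b t 0 0 + b t 1 1)) t := by
    intro t
    have := hb t 1 0
    have e : ((Λ t * b t + b t * Λ t) : Matrix (Fin 2) (Fin 2) ℝ) 1 0
        = -γ t * (b t 0 0 + b t 1 1) := by
      simp [hΛ t, Matrix.mul_apply, Matrix.vecMul, dotProduct, Matrix.vecHead, Matrix.vecTail, Fin.sum_univ_two]; ring
    rw [e] at this; exact this
  have h11 : ∀ t, HasDerivAt (fun s => b s 1 1) (b t 1 0 - γ t * b t 0 1) t := by
    intro t
    have := hb t 1 1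
    have e : ((Λ t * b t + b t * Λ t) : Matrix (Fin 2) (Fin 2) ℝ) 1 1
        = b t 1 0 - γ t * b t 0 1 := by
      simp [hΛ t, Matrix.mul_apply, Matrix.vecMul, dotProduct, Matrix.vecHead, Matrix.vecTail, Fin.sum_univ_two]; ring
    rw [e] at this; exact this
  -- diagonal entries coincide
  have hdiagf : ∀ t, HasDerivAt (fun s => b s 0 0 - b s 1 1) 0 t := by
    intro t
    have := (h00 t).sub (h11 t); rw [sub_self] at this; exact this
  have hdiag : ∀ t, b t 0 0 = b t 1 1 := by
    intro t
    have hc : (fun s => b s 0 0 - b s 1 1) t = (fun s => b s 0 0 - b s 1 1) 0 :=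
      is_const_of_deriv_eq_zero (fun s => (hdiagf s).differentiableAt)
        (fun s => (hdiagf s).deriv) t 0
    have h0 : b 0 0 0 - b 0 1 1 = 0 := by simp [hb0]
    have := hc
    simp only [] at this
    rw [h0] at this
    linarith [sub_eq_zero.mp this]
  -- determinant is constant = 1
  have hdetf : ∀ t, HasDerivAt (fun s => b s 0 0 * b s 1 1 - b s 0 1 * b s 1 0) 0 t := by
    intro t
    have := (((h00 t).mul (h11 t)).sub ((h01 t).mul (h10 t)))
    refine this.congr_deriv ?_
    ring
  have hdet : ∀ t, b t 0 0 * b t 1 1 - b t 0 1 * b t 1 0 = 1 := by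
    intro t
    have hc : (fun s => b s 0 0 * b s 1 1 - b s 0 1 * b s 1 0) t
        = (fun s => b s 0 0 * b s 1 1 - b s 0 1 * b s 1 0) 0 :=
      is_const_of_deriv_eq_zero (fun s => (hdetf s).differentiableAt)
        (fun s => (hdetf s).deriv) t 0
    simpa [hb0] using hc
  refine ⟨hdiag, ?_, ?_⟩
  · intro t₀ htr
    have htr' : b t₀ 0 0 + b t₀ 1 1 = 2 := by
      simpa [Matrix.trace_fin_two] using htr
    have h1 : b t₀ 0 0 = 1 := by have := hdiag t₀; linarith
    have h2 : b t₀ 1 1 = 1 := by linarith [hdiag t₀]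
    have hprod : b t₀ 0 1 * b t₀ 1 0 = 0 := by
      have := hdet t₀; rw [h1, h2] at this; linarith
    rcases mul_eq_zero.mp hprod with h | h
    · right
      refine ⟨-(b t₀ 1 0), ?_⟩
      ext i j
      fin_cases i <;> fin_cases j <;> simp [h1, h2, h]
    · left
      refine ⟨b t₀ 0 1, ?_⟩
      ext i j
      fin_cases i <;> fin_cases j <;> simp [h1, h2, h]
  · intro t₀ htr
    have htr' : b t₀ 0 0 + b t₀ 1 1 = -2 := by
      simpa [Matrix.trace_fin_two] using htr
    have h1 : b t₀ 0 0 = -1 := by have := hdiag t₀; linarith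
    have h2 : b t₀ 1 1 = -1 := by linarith [hdiag t₀]
    have hprod : b t₀ 0 1 * b t₀ 1 0 = 0 := by
      have := hdet t₀; rw [h1, h2] at this; linarith
    rcases mul_eq_zero.mp hprod with h | h
    · right
      refine ⟨b t₀ 1 0, ?_⟩
      ext i j
      fin_cases i <;> fin_cases j <;> simp [h1, h2, h]
    · left
      refine ⟨-(b t₀ 0 1), ?_⟩
      ext i j
      fin_cases i <;> fin_cases j <;> simp [h1, h2, h]
end

section
/- Let γ : ℝ → ℝ be continuous, let Λ(t) be the 2 × 2 real matrix with rows (0, 1) and (−γ(t), 0), and let b : ℝ → M₂(ℝ) be differentiable with b(0) = 1 and b′(t) = Λ(t) b(t) + b(t) Λ(t) for all t. If |Tr b(t₀)| > 2 at some time t₀, then both off-diagonal entries of b(t₀) are nonzero: b(t₀)₁₂ ≠ 0 and b(t₀)₂₁ ≠ 0. -/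
/-- Corollary to Proposition 4: inside the squeezing areas `|Tr b| > 2`,
neither off-diagonal entry of the symmetric-interval evolution matrix can
vanish. -/
theorem offdiag_ne_zero_in_squeezing_area
    (γ : ℝ → ℝ) (hγ : Continuous γ)
    (Λ : ℝ → Matrix (Fin 2) (Fin 2) ℝ)
    (hΛ : ∀ t, Λ t = !![0, 1; -γ t, 0])
    (b : ℝ → Matrix (Fin 2) (Fin 2) ℝ)
    (hb0 : b 0 = 1)
    (hb : ∀ t, ∀ i j : Fin 2,
      HasDerivAt (fun s => b s i j) ((Λ t * b t + b t * Λ t) i j) t)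
    (t₀ : ℝ) (htr : 2 < |(b t₀).trace|) :
    b t₀ 0 1 ≠ 0 ∧ b t₀ 1 0 ≠ 0 := by
  -- explicit forms of the RHS entries
  have e00 : ∀ t, (Λ t * b t + b t * Λ t) 0 0 = b t 1 0 - γ t * b t 0 1 := by
    intro t; simp [hΛ, Matrix.mul_apply, Matrix.vecMul, dotProduct, Fin.sum_univ_two] <;> ring
  have e01 : ∀ t, (Λ t * b t + b t * Λ t) 0 1 = b t 1 1 + b t 0 0 := by
    intro t; simp [hΛ, Matrix.mul_apply, Matrix.vecMul, dotProduct, Fin.sum_univ_two] <;> ring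
  have e10 : ∀ t, (Λ t * b t + b t * Λ t) 1 0 = -γ t * b t 0 0 - γ t * b t 1 1 := by
    intro t; simp [hΛ, Matrix.mul_apply, Matrix.vecMul, dotProduct, Fin.sum_univ_two] <;> ring
  have e11 : ∀ t, (Λ t * b t + b t * Λ t) 1 1 = b t 1 0 - γ t * b t 0 1 := by
    intro t; simp [hΛ, Matrix.mul_apply, Matrix.vecMul, dotProduct, Fin.sum_univ_two] <;> ring
  -- a - d is constant
  have hF : ∀ t, HasDerivAt (fun s => b s 0 0 - b s 1 1) 0 t := by
    intro t
    have := (hb t 0 0).sub (hb t 1 1)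
    rwa [e00, e11, sub_self] at this
  have hFc : ∀ x y : ℝ, b x 0 0 - b x 1 1 = b y 0 0 - b y 1 1 := by
    apply is_const_of_deriv_eq_zero
    · exact fun x => (hF x).differentiableAt
    · exact fun x => (hF x).deriv
  have had : b t₀ 0 0 = b t₀ 1 1 := by
    have := hFc t₀ 0
    simp [hb0, Matrix.one_apply] at this
    linarith
  -- determinant is constant
  have hG : ∀ t, HasDerivAt
      (fun s => b s 0 0 * b s 1 1 - b s 0 1 * b s 1 0) 0 t := by
    intro t
    have h := (((hb t 0 0).mul (hb t 1 1)).sub ((hb t 0 1).mul (hb t 1 0)))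
    rw [e00, e11, e01, e10] at h
    refine h.congr_deriv ?_
    ring
  have hGc : ∀ x y : ℝ, b x 0 0 * b x 1 1 - b x 0 1 * b x 1 0
      = b y 0 0 * b y 1 1 - b y 0 1 * b y 1 0 := by
    apply is_const_of_deriv_eq_zero
    · exact fun x => (hG x).differentiableAt
    · exact fun x => (hG x).deriv
  have hdet : b t₀ 0 0 * b t₀ 1 1 - b t₀ 0 1 * b t₀ 1 0 = 1 := by
    have := hGc t₀ 0
    simp [hb0, Matrix.one_apply] at this
    linarith
  -- trace
  have htr' : 2 < |b t₀ 0 0 + b t₀ 1 1| := by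
    rwa [Matrix.trace_fin_two] at htr
  have ha : 1 < b t₀ 0 0 * b t₀ 0 0 := by
    rw [← had, ← two_mul, abs_mul, abs_two] at htr'
    have h1 : 1 < |b t₀ 0 0| := by linarith
    nlinarith [abs_nonneg (b t₀ 0 0), abs_mul_abs_self (b t₀ 0 0)]
  rw [← had] at hdet
  have hpos : 0 < b t₀ 0 1 * b t₀ 1 0 := by linarith
  exact ⟨fun h => by simp [h] at hpos, fun h => by simp [h] at hpos⟩
end

section
/- For a nonzero real β, let u(β) be the 4 × 4 real matrix with rows (1, 0, 0, 1/β), (0, −1, −1/β, 0), (0, 0, 1, 0), (0, 0, 0, −1), and let E be the 4 × 4 matrix whose only nonzero entries are E₁₄ = 1 and E₂₃ = 1. Then for any positive integer n and any nonzero reals β₁, …, β₂ₙ: u(β₂ₙ)·u(β₂ₙ₋₁) ⋯ u(β₂)·u(β₁) = 1 + Γ·E, where Γ = Σ_{k=1}^{n} (1/β₂ₖ₋₁ − 1/β₂ₖ). In particular, the product equals the identity matrix (an evolution loop) if and only if Γ = 0. -/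
private lemma landau_pair (a b : ℝ) :
    (!![1, 0, 0, 1 / b; 0, -1, -(1 / b), 0; 0, 0, 1, 0; 0, 0, 0, -1] *
      !![1, 0, 0, 1 / a; 0, -1, -(1 / a), 0; 0, 0, 1, 0; 0, 0, 0, -1]
        : Matrix (Fin 4) (Fin 4) ℝ) =
    1 + (1 / a - 1 / b) •
      (!![0, 0, 0, 1; 0, 0, 1, 0; 0, 0, 0, 0; 0, 0, 0, 0] : Matrix (Fin 4) (Fin 4) ℝ) := by
  ext i j
  fin_cases i <;> fin_cases j <;>
    simp [Matrix.mul_apply, Fin.sum_univ_succ, Matrix.one_apply, Matrix.vecHead, Matrix.vecTail] <;> ring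

private lemma landau_Esq :
    ((!![0, 0, 0, 1; 0, 0, 1, 0; 0, 0, 0, 0; 0, 0, 0, 0] : Matrix (Fin 4) (Fin 4) ℝ)) *
      !![0, 0, 0, 1; 0, 0, 1, 0; 0, 0, 0, 0; 0, 0, 0, 0] = 0 := by
  ext i j
  fin_cases i <;> fin_cases j <;>
    simp [Matrix.mul_apply, Fin.sum_univ_succ, Matrix.vecHead, Matrix.vecTail]

/-- The product formula (36) for `2n` semicircular Landau π-pulses:
`u(β₂ₙ)⋯u(β₁) = 1 + Γ·E` with `Γ = Σₖ (1/β₂ₖ₋₁ − 1/β₂ₖ)`, so the sequence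
closes into an evolution loop iff `Γ = 0`. -/
theorem landau_pulse_product_formula
    (n : ℕ) (hn : 0 < n)
    (β : ℕ → ℝ) (hβ : ∀ i, 1 ≤ i → i ≤ 2 * n → β i ≠ 0)
    (U : ℝ → Matrix (Fin 4) (Fin 4) ℝ)
    (hU : ∀ b : ℝ, U b = !![1, 0, 0, 1 / b;
                            0, -1, -(1 / b), 0;
                            0, 0, 1, 0;
                            0, 0, 0, -1])
    (E : Matrix (Fin 4) (Fin 4) ℝ)
    (hE : E = !![0, 0, 0, 1;
                 0, 0, 1, 0;
                 0, 0, 0, 0;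
                 0, 0, 0, 0])
    (Γ : ℝ) (hΓ : Γ = ∑ k ∈ Finset.range n, (1 / β (2 * k + 1) - 1 / β (2 * k + 2)))
    (P : Matrix (Fin 4) (Fin 4) ℝ)
    (hP : P = (List.range (2 * n)).foldl (fun M k => U (β (k + 1)) * M) 1) :
    P = 1 + Γ • E ∧ (P = 1 ↔ Γ = 0) := by
  have key : ∀ m : ℕ,
      (List.range (2 * m)).foldl (fun M k => U (β (k + 1)) * M) 1 =
        1 + (∑ k ∈ Finset.range m, (1 / β (2 * k + 1) - 1 / β (2 * k + 2))) • E := by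
    intro m
    induction m with
    | zero => simp
    | succ m ih =>
      have h2 : 2 * (m + 1) = (2 * m + 1) + 1 := by ring
      rw [h2, List.range_succ, List.foldl_append, List.range_succ, List.foldl_append]
      simp only [List.foldl_cons, List.foldl_nil, ih]
      rw [← Matrix.mul_assoc, hU, hU, landau_pair _ _, ← hE]
      · rw [Finset.sum_range_succ]
        rw [Matrix.mul_add, Matrix.mul_one, Matrix.add_mul, Matrix.one_mul,
          Matrix.smul_mul, Matrix.mul_smul]
        rw [hE, landau_Esq, ← hE]
        simp only [smul_zero, smul_smul, add_zero]
        rw [add_smul]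
        abel
  have hpair := key n
  have hPformula : P = 1 + Γ • E := by rw [hP, hΓ, hpair]
  refine ⟨hPformula, ?_, fun h => by rw [hPformula, h, zero_smul, add_zero]⟩
  intro h
  rw [hPformula] at h
  have hz : Γ • E = 0 := add_eq_left.mp h
  have := congrFun (congrFun hz 0) 3
  simpa [hE] using this
end

section
/- Let a be a real number and define f : ℝ → ℝ by the everywhere-convergent power series f(r) = Σ_{n=0}^{∞} (−a)ⁿ r^{2n} / (n! (n+1)!). Then f satisfies the differential equation r f″(r) + 3 f′(r) + 4a·r·f(r) = 0 for all r ∈ ℝ; equivalently, writing a = (ω/(2c))², the function Φ = f solves (d²/dr²)(rΦ) + (ω²/c²)(rΦ) + dΦ/dr = 0, and its coefficients Φ₂ₙ = (−a)ⁿ/(n!(n+1)!) obey the recurrence Φ₂ₙ = −(ω/(2c))² Φ₂₍ₙ₋₁₎/(n(n+1)). -/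
noncomputable def Cw (a : ℝ) (n : ℕ) : ℝ :=
  (-a) ^ n / ((n.factorial : ℝ) * ((n + 1).factorial : ℝ))

noncomputable def gw (a : ℝ) (n : ℕ) (r : ℝ) : ℝ := Cw a n * r ^ (2 * n)
noncomputable def gw1 (a : ℝ) (n : ℕ) (r : ℝ) : ℝ :=
  Cw a n * ((2 * n : ℕ) : ℝ) * r ^ (2 * n - 1)
noncomputable def gw2 (a : ℝ) (n : ℕ) (r : ℝ) : ℝ :=
  Cw a n * ((2 * n : ℕ) : ℝ) * ((2 * n - 1 : ℕ) : ℝ) * r ^ (2 * n - 2)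

lemma coeffC (a : ℝ) (n : ℕ) :
    Cw a (n + 1) * ((n + 1) * (n + 2)) = -a * Cw a n := by
  have h1 : ((n.factorial : ℝ)) ≠ 0 := Nat.cast_ne_zero.mpr n.factorial_ne_zero
  have h2 : (((n + 1).factorial : ℝ)) ≠ 0 := Nat.cast_ne_zero.mpr (n + 1).factorial_ne_zero
  unfold Cw
  rw [show n + 1 + 1 = n + 2 from rfl, Nat.factorial_succ (n + 1), Nat.factorial_succ n, pow_succ]
  push_cast
  field_simp
  ring

lemma aux_bound (a r R : ℝ) (hr : |r| ≤ R) (hR : 1 ≤ R) (n q e : ℕ)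
    (hq : (q : ℝ) ≤ 4 * 4 ^ n) (he : e ≤ 2 * n) :
    ‖Cw a n * (q : ℝ) * r ^ e‖ ≤ 4 * ((4 * (|a| + 1) * R ^ 2) ^ n / n.factorial) := by
  have h1 : (0:ℝ) < (n.factorial : ℝ) := by positivity
  have h2 : (1:ℝ) ≤ ((n+1).factorial : ℝ) := Nat.one_le_cast.mpr (n+1).factorial_pos
  have hCn : ‖Cw a n‖ ≤ |a| ^ n / (n.factorial : ℝ) := by
    unfold Cw
    rw [norm_div, norm_pow, norm_neg, norm_mul]
    simp only [Real.norm_eq_abs, Nat.abs_cast, abs_abs]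
    gcongr
    exact le_mul_of_one_le_right h1.le h2
  have hre : ‖r ^ e‖ ≤ R ^ (2 * n) := by
    rw [norm_pow, Real.norm_eq_abs]
    calc |r| ^ e ≤ R ^ e := by gcongr
      _ ≤ R ^ (2 * n) := pow_le_pow_right₀ hR he
  calc ‖Cw a n * (q : ℝ) * r ^ e‖ = ‖Cw a n‖ * ‖(q : ℝ)‖ * ‖r ^ e‖ := by
        rw [norm_mul, norm_mul]
    _ ≤ (|a| ^ n / (n.factorial : ℝ)) * (4 * 4 ^ n) * R ^ (2 * n) := by
        gcongr
        rw [Real.norm_eq_abs, Nat.abs_cast]; exact hq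
    _ ≤ ((|a| + 1) ^ n / (n.factorial : ℝ)) * (4 * 4 ^ n) * R ^ (2 * n) := by
        gcongr
        linarith [abs_nonneg a]
    _ = 4 * ((4 * (|a| + 1) * R ^ 2) ^ n / n.factorial) := by
        rw [mul_pow, mul_pow, pow_mul]
        field_simp

lemma natq1 (n : ℕ) : ((2 * n : ℕ) : ℝ) ≤ 4 * 4 ^ n := by
  have h : (2 * n : ℕ) ≤ 4 * 4 ^ n := by
    have := (Nat.lt_two_pow_self (n := n)).le
    calc 2 * n ≤ 2 * 2 ^ n := by omega
      _ ≤ 4 * 4 ^ n := by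
          have : (2:ℕ) ^ n ≤ 4 ^ n := Nat.pow_le_pow_left (by norm_num) n
          omega
  calc ((2 * n : ℕ) : ℝ) ≤ ((4 * 4 ^ n : ℕ) : ℝ) := Nat.cast_le.mpr h
    _ = 4 * 4 ^ n := by push_cast; ring

lemma natq2 (n : ℕ) : ((2 * n * (2 * n - 1) : ℕ) : ℝ) ≤ 4 * 4 ^ n := by
  have h : (2 * n * (2 * n - 1) : ℕ) ≤ 4 * 4 ^ n := by
    have h2 := (Nat.lt_two_pow_self (n := n)).le
    have h4 : (4:ℕ) ^ n = 2 ^ n * 2 ^ n := by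
      rw [show (4:ℕ) = 2 * 2 from rfl, Nat.mul_pow]
    calc 2 * n * (2 * n - 1) ≤ 2 * n * (2 * n) := Nat.mul_le_mul_left _ (by omega)
      _ ≤ 4 * (2 ^ n * 2 ^ n) := by nlinarith
      _ = 4 * 4 ^ n := by rw [h4]
  calc ((2 * n * (2 * n - 1) : ℕ) : ℝ) ≤ ((4 * 4 ^ n : ℕ) : ℝ) := Nat.cast_le.mpr h
    _ = 4 * 4 ^ n := by push_cast; ring

lemma summ_gw (a r : ℝ) : Summable (fun n => gw a n r) := by
  apply Summable.of_norm_bounded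
    ((Real.summable_pow_div_factorial (4 * (|a| + 1) * (|r| + 1) ^ 2)).mul_left 4)
  intro n
  have := aux_bound a r (|r| + 1) (by linarith [abs_nonneg r]) (by linarith [abs_nonneg r]) n 1 (2 * n)
    (by
      have h4 : (1:ℝ) ≤ 4 ^ n := one_le_pow₀ (by norm_num)
      push_cast; linarith) le_rfl
  simpa [gw, mul_one] using this

lemma summ_gw1 (a r : ℝ) : Summable (fun n => gw1 a n r) := by
  apply Summable.of_norm_bounded
    ((Real.summable_pow_div_factorial (4 * (|a| + 1) * (|r| + 1) ^ 2)).mul_left 4)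
  intro n
  exact aux_bound a r (|r| + 1) (by linarith [abs_nonneg r]) (by linarith [abs_nonneg r]) n (2 * n)
    (2 * n - 1) (natq1 n) (by omega)

lemma summ_gw2 (a r : ℝ) : Summable (fun n => gw2 a n r) := by
  apply Summable.of_norm_bounded
    ((Real.summable_pow_div_factorial (4 * (|a| + 1) * (|r| + 1) ^ 2)).mul_left 4)
  intro n
  have := aux_bound a r (|r| + 1) (by linarith [abs_nonneg r]) (by linarith [abs_nonneg r]) n
    (2 * n * (2 * n - 1)) (2 * n - 2) (natq2 n) (by omega)
  have he : gw2 a n r = Cw a n * ((2 * n * (2 * n - 1) : ℕ) : ℝ) * r ^ (2 * n - 2) := by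
    unfold gw2; push_cast; ring
  rw [he]
  exact this

lemma hd_g (a : ℝ) (n : ℕ) (y : ℝ) : HasDerivAt (gw a n) (gw1 a n y) y := by
  have h := (hasDerivAt_pow (2 * n) y).const_mul (Cw a n)
  refine h.congr_deriv ?_
  unfold gw1; ring

lemma hd_g1 (a : ℝ) (n : ℕ) (y : ℝ) : HasDerivAt (gw1 a n) (gw2 a n y) y := by
  have h := (hasDerivAt_pow (2 * n - 1) y).const_mul (Cw a n * ((2 * n : ℕ) : ℝ))
  refine h.congr_deriv ?_
  rw [show 2 * n - 1 - 1 = 2 * n - 2 from by omega]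
  unfold gw2; ring


lemma hd_sum1 (a : ℝ) (y : ℝ) :
    HasDerivAt (fun s => ∑' n, gw a n s) (∑' n, gw1 a n y) y := by
  have hmem : y ∈ Metric.ball (0 : ℝ) (|y| + 1) := by simp [Real.dist_eq]
  have hu : Summable (fun n : ℕ => 4 * ((4 * (|a| + 1) * (|y| + 1) ^ 2) ^ n / n.factorial)) :=
    (Real.summable_pow_div_factorial _).mul_left 4
  have hb : ∀ (n : ℕ) (z : ℝ), z ∈ Metric.ball (0:ℝ) (|y| + 1) →
      ‖gw1 a n z‖ ≤ 4 * ((4 * (|a| + 1) * (|y| + 1) ^ 2) ^ n / n.factorial) := by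
    intro n z hz
    have hz' : |z| ≤ |y| + 1 := by
      have := mem_ball_iff_norm.mp hz
      simp only [sub_zero, Real.norm_eq_abs] at this
      linarith
    exact aux_bound a z (|y| + 1) hz' (by linarith [abs_nonneg y]) n (2 * n) (2 * n - 1)
      (natq1 n) (by omega)
  exact hasDerivAt_tsum_of_isPreconnected hu Metric.isOpen_ball
    (convex_ball (0:ℝ) (|y| + 1)).isPreconnected
    (fun n z _ => hd_g a n z) hb hmem (summ_gw a y) hmem

lemma hd_sum2 (a : ℝ) (y : ℝ) :
    HasDerivAt (fun s => ∑' n, gw1 a n s) (∑' n, gw2 a n y) y := by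
  have hmem : y ∈ Metric.ball (0 : ℝ) (|y| + 1) := by simp [Real.dist_eq]
  have hu : Summable (fun n : ℕ => 4 * ((4 * (|a| + 1) * (|y| + 1) ^ 2) ^ n / n.factorial)) :=
    (Real.summable_pow_div_factorial _).mul_left 4
  have hb : ∀ (n : ℕ) (z : ℝ), z ∈ Metric.ball (0:ℝ) (|y| + 1) →
      ‖gw2 a n z‖ ≤ 4 * ((4 * (|a| + 1) * (|y| + 1) ^ 2) ^ n / n.factorial) := by
    intro n z hz
    have hz' : |z| ≤ |y| + 1 := by
      have := mem_ball_iff_norm.mp hz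
      simp only [sub_zero, Real.norm_eq_abs] at this
      linarith
    have he : gw2 a n z = Cw a n * ((2 * n * (2 * n - 1) : ℕ) : ℝ) * z ^ (2 * n - 2) := by
      unfold gw2; push_cast; ring
    rw [he]
    exact aux_bound a z (|y| + 1) hz' (by linarith [abs_nonneg y]) n
      (2 * n * (2 * n - 1)) (2 * n - 2) (natq2 n) (by omega)
  exact hasDerivAt_tsum_of_isPreconnected hu Metric.isOpen_ball
    (convex_ball (0:ℝ) (|y| + 1)).isPreconnected
    (fun n z _ => hd_g1 a n z) hb hmem (summ_gw1 a y) hmem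

lemma ode_sum (a r : ℝ) :
    r * (∑' n, gw2 a n r) + 3 * (∑' n, gw1 a n r) + 4 * a * r * (∑' n, gw a n r) = 0 := by
  have S0 := summ_gw a r
  have S1 := summ_gw1 a r
  have S2 := summ_gw2 a r
  rw [← tsum_mul_left (a := r), ← tsum_mul_left (a := 3), ← tsum_mul_left (a := 4 * a * r),
    ← Summable.tsum_add (S2.mul_left r) (S1.mul_left 3)]
  have hA : Summable (fun n => r * gw2 a n r + 3 * gw1 a n r) :=
    (S2.mul_left r).add (S1.mul_left 3)
  rw [Summable.tsum_eq_zero_add hA]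
  have hA0 : r * gw2 a 0 r + 3 * gw1 a 0 r = 0 := by
    norm_num [gw1, gw2]
  rw [hA0, zero_add, ← Summable.tsum_add ((summable_nat_add_iff 1).mpr hA) (S0.mul_left (4 * a * r))]
  have hterm : ∀ n : ℕ,
      (r * gw2 a (n + 1) r + 3 * gw1 a (n + 1) r) + 4 * a * r * gw a n r = 0 := by
    intro n
    have key := coeffC a n
    unfold gw gw1 gw2
    rw [show 2 * (n + 1) - 2 = 2 * n from by omega, show 2 * (n + 1) - 1 = 2 * n + 1 from by omega]
    push_cast
    linear_combination (4 * r * r ^ (2 * n)) * key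
  rw [tsum_congr hterm, tsum_zero]

/-- The radial profile `Φ(r) = Σ (−a)ⁿ r²ⁿ/(n!(n+1)!)` of the cylindrical
relativistic vector potential: the series converges everywhere, solves
`rΦ'' + 3Φ' + 4arΦ = 0` (i.e. `(rΦ)'' + (ω²/c²)(rΦ) + Φ' = 0` with
`a = (ω/(2c))²`), and its coefficients obey the stated recurrence. -/
theorem cylindrical_wave_radial_profile
    (a : ℝ) (f : ℝ → ℝ)
    (hf : ∀ r : ℝ, f r = ∑' n : ℕ,
      (-a) ^ n * r ^ (2 * n) / ((n.factorial : ℝ) * ((n + 1).factorial : ℝ))) :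
    (∀ r : ℝ, Summable (fun n : ℕ =>
      (-a) ^ n * r ^ (2 * n) / ((n.factorial : ℝ) * ((n + 1).factorial : ℝ)))) ∧
    (∀ r : ℝ, r * deriv (deriv f) r + 3 * deriv f r + 4 * a * r * f r = 0) ∧
    (∀ ω c : ℝ, c ≠ 0 → a = (ω / (2 * c)) ^ 2 →
      ∀ r : ℝ, deriv (deriv (fun s => s * f s)) r + ω ^ 2 / c ^ 2 * (r * f r)
        + deriv f r = 0) ∧
    (∀ n : ℕ, 0 < n →
      (-a) ^ n / ((n.factorial : ℝ) * ((n + 1).factorial : ℝ))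
        = -a * ((-a) ^ (n - 1) / (((n - 1).factorial : ℝ) * (n.factorial : ℝ)))
            / (n * (n + 1))) := by
  have hfe : f = fun s => ∑' n, gw a n s := by
    funext r
    rw [hf r]
    exact tsum_congr fun n => by simp only [gw, Cw, div_mul_eq_mul_div]
  have hfe' : ∀ y, f y = ∑' n, gw a n y := fun y => by rw [hfe]
  have hD1 : deriv f = fun y => ∑' n, gw1 a n y := by
    funext y; rw [hfe]; exact (hd_sum1 a y).deriv
  have hD1' : ∀ y, deriv f y = ∑' n, gw1 a n y := fun y => by rw [hD1]
  have hD2 : ∀ y, deriv (deriv f) y = ∑' n, gw2 a n y := by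
    intro y; rw [hD1]; exact (hd_sum2 a y).deriv
  have hff : ∀ y, HasDerivAt f (∑' n, gw1 a n y) y := fun y => by
    rw [hfe]; exact hd_sum1 a y
  refine ⟨?_, ?_, ?_, ?_⟩
  · intro r
    exact (summ_gw a r).congr fun n => by simp only [gw, Cw, div_mul_eq_mul_div]
  · intro r
    rw [hD2 r, hD1' r, hfe' r]
    exact ode_sum a r
  · intro ω c hc ha r
    have hw : ω ^ 2 / c ^ 2 = 4 * a := by rw [ha]; field_simp; ring
    have hder : deriv (fun s => s * f s) = fun y => f y + y * (∑' n, gw1 a n y) := by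
      funext y
      have h1 : HasDerivAt (fun s => s * f s) (1 * f y + y * ∑' n, gw1 a n y) y :=
        (hasDerivAt_id y).mul (hff y)
      rw [h1.deriv]
      ring
    have h2 : HasDerivAt (fun y => f y + y * (∑' n, gw1 a n y))
        ((∑' n, gw1 a n r) + (1 * (∑' n, gw1 a n r) + r * (∑' n, gw2 a n r))) r :=
      (hff r).add ((hasDerivAt_id r).mul (hd_sum2 a r))
    have e2 : deriv (deriv (fun s => s * f s)) r
        = (∑' n, gw1 a n r) + (1 * (∑' n, gw1 a n r) + r * (∑' n, gw2 a n r)) := by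
      rw [hder]; exact h2.deriv
    rw [e2, hD1' r, hw, hfe' r]
    linear_combination ode_sum a r
  · intro n hn
    match n, hn with
    | (m + 1), _ =>
      have key := coeffC a m
      unfold Cw at key
      have hne : ((m + 1 : ℕ) : ℝ) * (((m + 1 : ℕ) : ℝ) + 1) ≠ 0 := by positivity
      rw [Nat.add_sub_cancel, eq_div_iff hne]
      push_cast at key ⊢
      linear_combination key
end
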